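/- The controlled-controlled-(XZ) gate Λ²(XZ) equals T · (I₄ ⊗ H) · T · (I₄ ⊗ H), where T is the Toffoli matrix and I₄ ⊗ H applies Hadamard to the third qubit. -/
import Mathlib


open Matrix

noncomputable def Had : Matrix (Fin 2) (Fin 2) ℝ :=
  (Real.sqrt 2)⁻¹ • !![1, 1; 1, -1]
def X : Matrix (Fin 2) (Fin 2) ℝ := !![0, 1; 1, 0]
def Z : Matrix (Fin 2) (Fin 2) ℝ := !![1, 0; 0, -1]

/-- `Λ²(A)`: applies the 2×2 matrix `A` to the third qubit when the first two
qubits are both `|1⟩`, and is the identity otherwise (basis `|abc⟩`). -/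
def CC (A : Matrix (Fin 2) (Fin 2) ℝ) :
    Matrix (Fin 2 × Fin 2 × Fin 2) (Fin 2 × Fin 2 × Fin 2) ℝ :=
  fun p q =>
    match p, q with
    | (a, b, c), (a', b', c') =>
        if a = a' ∧ b = b' then
          (if a = 1 ∧ b = 1 then A c c' else if c = c' then 1 else 0)
        else 0

/-- The Toffoli gate `T = Λ²(X)`. -/
def Toffoli : Matrix (Fin 2 × Fin 2 × Fin 2) (Fin 2 × Fin 2 × Fin 2) ℝ := CC X

/-- `I₄ ⊗ H`: Hadamard applied to the third qubit. -/
noncomputable def IH : Matrix (Fin 2 × Fin 2 × Fin 2) (Fin 2 × Fin 2 × Fin 2) ℝ :=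
  fun p q =>
    match p, q with
    | (a, b, c), (a', b', c') => if a = a' ∧ b = b' then Had c c' else 0

set_option maxHeartbeats 2000000 in
theorem cc_XZ_eq_THTH : CC (X * Z) = Toffoli * IH * Toffoli * IH := by
  have h2 : Real.sqrt 2 * Real.sqrt 2 = 2 := Real.mul_self_sqrt (by norm_num)
  have h2' : Real.sqrt 2 ≠ 0 := by positivity
  ext ⟨a,b,c⟩ ⟨a',b',c'⟩
  fin_cases a <;> fin_cases b <;> fin_cases c <;> fin_cases a' <;> fin_cases b' <;> fin_cases c' <;>
  · simp only [mul_apply, Fintype.sum_prod_type, Fin.sum_univ_two,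
      Toffoli, IH, CC, X, Z, Had, Matrix.smul_apply, smul_eq_mul]
    norm_num [Matrix.mul_apply, Fin.sum_univ_two]
    try field_simp
    try ring_nf
    try simp [h2]
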